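/- arXiv:1211.0354 — 5 statements merged into one kernel-verified Lean document; each statement's English description precedes it below -/
import Mathlib

section
/- Let p₀, p₁, …, pₙ be points in ℝ³ forming an open polygonal curve P with all consecutive vertices distinct. If the total curvature of P (the sum of the exterior angles at the interior vertices p₁, …, p_{n-1}) is strictly less than π, then P is simple, i.e., the piecewise linear path through p₀, …, pₙ is injective. -/
open Real InnerProductGeometry
open scoped RealInnerProductSpace

variable {V : Type*} [NormedAddCommGroup V] [InnerProductSpace ℝ V]


lemma norm_sub_cos_smul {a b : V} (ha : ‖a‖ = 1) (hb : ‖b‖ = 1) {t : ℝ}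
    (hab : ⟪a, b⟫ = Real.cos t) (ht0 : 0 ≤ t) (htπ : t ≤ π) :
    ‖a - Real.cos t • b‖ = Real.sin t := by
  have h1 : ‖a - Real.cos t • b‖ ^ 2 = Real.sin t ^ 2 := by
    rw [norm_sub_sq_real, real_inner_smul_right, hab, norm_smul, ha, hb]
    have := Real.sin_sq_add_cos_sq t
    have h2 : (‖Real.cos t‖ * 1) ^ 2 = Real.cos t ^ 2 := by
      rw [Real.norm_eq_abs]; rw [mul_one, sq_abs]
    rw [h2]; nlinarith
  have hs := Real.sin_nonneg_of_nonneg_of_le_pi ht0 htπ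
  nlinarith [norm_nonneg (a - Real.cos t • b)]

/-- Spherical triangle inequality for unit vectors. -/
lemma angle_triangle_unit {a b c : V} (ha : ‖a‖ = 1) (hb : ‖b‖ = 1) (hc : ‖c‖ = 1) :
    angle a c ≤ angle a b + angle b c := by
  set α := angle a b with hα
  set γ := angle b c with hγ
  have hab : ⟪a, b⟫ = Real.cos α := by
    have := cos_angle a b; rw [ha, hb] at this; simpa using this.symm
  have hcb : ⟪c, b⟫ = Real.cos γ := by
    have := cos_angle c b; rw [hc, hb] at this
    rw [hγ, angle_comm b c]; simpa using this.symm
  have hα0 : 0 ≤ α := angle_nonneg a b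
  have hγ0 : 0 ≤ γ := angle_nonneg b c
  have hαπ : α ≤ π := angle_le_pi a b
  have hγπ : γ ≤ π := angle_le_pi b c
  have hsinα := norm_sub_cos_smul ha hb hab hα0 hαπ
  have hsinγ := norm_sub_cos_smul hc hb hcb hγ0 hγπ
  have hkey : Real.cos (α + γ) ≤ ⟪a, c⟫ := by
    have hcs : ⟪a - Real.cos α • b, c - Real.cos γ • b⟫
        = ⟪a, c⟫ - Real.cos α * Real.cos γ := by
      have hba : ⟪b, a⟫ = Real.cos α := by rw [real_inner_comm]; exact hab
      have hbc : ⟪b, c⟫ = Real.cos γ := by rw [real_inner_comm]; exact hcb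
      simp only [inner_sub_left, inner_sub_right, real_inner_smul_left,
        real_inner_smul_right, real_inner_self_eq_norm_sq, hb, hba, hbc, hab, hcb]
      ring
    have hCS := abs_real_inner_le_norm (a - Real.cos α • b) (c - Real.cos γ • b)
    rw [hsinα, hsinγ] at hCS
    rw [Real.cos_add]
    have := neg_abs_le ⟪a - Real.cos α • b, c - Real.cos γ • b⟫
    nlinarith [hCS, hcs]
  by_cases hsum : α + γ ≤ π
  · have hac : angle a c = Real.arccos ⟪a, c⟫ := by
      unfold InnerProductGeometry.angle
      rw [ha, hc]; norm_num
    rw [hac]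
    calc Real.arccos ⟪a, c⟫ ≤ Real.arccos (Real.cos (α + γ)) := by
          rw [Real.arccos_eq_pi_div_two_sub_arcsin, Real.arccos_eq_pi_div_two_sub_arcsin]
          have := Real.monotone_arcsin hkey
          linarith
      _ = α + γ := Real.arccos_cos (by linarith) hsum
  · linarith [angle_le_pi a c]

set_option maxHeartbeats 1000000 in
lemma exists_good_direction (n : ℕ) (hn : 1 ≤ n) (u : ℕ → V) (hu : ∀ j < n, u j ≠ 0)
    (htc : ∑ m ∈ Finset.Ico 1 n, angle (u m) (u (m - 1)) < π) :
    ∃ e : V, ∀ j < n, 0 < ⟪e, u j⟫ := by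
  classical
  set v : ℕ → V := fun j => ‖u j‖⁻¹ • u j with hv
  have hvnorm : ∀ j < n, ‖v j‖ = 1 := by
    intro j hj
    rw [hv]; simp only [norm_smul, norm_inv, norm_norm]
    exact inv_mul_cancel₀ (norm_ne_zero_iff.2 (hu j hj))
  have hvangle : ∀ i j, i < n → j < n → angle (v i) (v j) = angle (u i) (u j) := by
    intro i j hi hj
    rw [hv]
    rw [angle_smul_left_of_pos _ _ (inv_pos.2 (norm_pos_iff.2 (hu i hi))),
      angle_smul_right_of_pos _ _ (inv_pos.2 (norm_pos_iff.2 (hu j hj)))]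
  set θ : ℕ → ℝ := fun m => angle (u m) (u (m - 1)) with hθdef
  have hθ0 : ∀ m, 0 ≤ θ m := fun m => angle_nonneg _ _
  set A : ℕ → ℝ := fun j => ∑ m ∈ Finset.Ico 1 (j + 1), θ m with hA
  have hA0 : A 0 = 0 := by simp [hA]
  have hAsucc : ∀ j, A (j + 1) = A j + θ (j + 1) := by
    intro j
    rw [hA]
    exact Finset.sum_Ico_succ_top (by omega) _
  have hAnonneg : ∀ j, 0 ≤ A j := fun j => Finset.sum_nonneg fun m _ => hθ0 m
  have hAmono : Monotone A := by
    apply monotone_nat_of_le_succ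
    intro j; rw [hAsucc]; linarith [hθ0 (j + 1)]
  set S : ℝ := A (n - 1) with hS
  have hSval : S = ∑ m ∈ Finset.Ico 1 n, θ m := by
    rw [hS]; simp only [hA]; rw [Nat.sub_add_cancel hn]
  have hSπ : S < π := by rw [hSval]; exact htc
  -- chain inequality
  have hchain : ∀ i j, i ≤ j → j < n → angle (v i) (v j) ≤ A j - A i := by
    intro i j hij hjn
    induction j with
    | zero =>
      interval_cases i
      rw [angle_self]
      · linarith
      · intro h
        exact hu 0 hjn (by simpa [hv, smul_eq_zero, inv_eq_zero, norm_eq_zero] using h)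
    | succ j ih =>
      rcases Nat.lt_or_ge i (j + 1) with hlt | hge
      · have hj : j < n := by omega
        have h1 := ih (by omega) hj
        have h2 : angle (v i) (v (j + 1)) ≤ angle (v i) (v j) + angle (v j) (v (j + 1)) :=
          angle_triangle_unit (hvnorm i (by omega)) (hvnorm j hj) (hvnorm (j + 1) hjn)
        have h3 : angle (v j) (v (j + 1)) = θ (j + 1) := by
          rw [hvangle j (j + 1) hj hjn, hθdef]
          simp [angle_comm]
        rw [hAsucc]
        linarith
      · have : i = j + 1 := by omega
        subst this
        rw [angle_self]
        · linarith
        · intro h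
          exact hu (j + 1) hjn (by simpa [hv, smul_eq_zero, inv_eq_zero, norm_eq_zero] using h)
  -- final step from an "axis" vector
  have final : ∀ e : V, e ≠ 0 → (∀ j < n, angle e (v j) < π / 2) →
      ∀ j < n, 0 < ⟪e, u j⟫ := by
    intro e he hang j hj
    have hc : 0 < Real.cos (angle e (v j)) :=
      Real.cos_pos_of_mem_Ioo ⟨by linarith [angle_nonneg e (v j), Real.pi_pos], hang j hj⟩
    rw [cos_angle] at hc
    have hpos : 0 < ⟪e, v j⟫ := by
      by_contra hle
      push_neg at hle
      have : ⟪e, v j⟫ / (‖e‖ * ‖v j‖) ≤ 0 := div_nonpos_of_nonpos_of_nonneg hle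
        (by positivity)
      linarith
    rw [hv] at hpos
    simp only [real_inner_smul_right] at hpos
    have hn0 : 0 < ‖u j‖ := norm_pos_iff.2 (hu j hj)
    have h2 := mul_pos hn0 hpos
    rw [← mul_assoc, mul_inv_cancel₀ hn0.ne', one_mul] at h2
    exact h2
  by_cases hStriv : S ≤ 0
  · refine ⟨v 0, final (v 0) ?_ ?_⟩
    · intro h
      exact hu 0 (by omega) (by simpa [hv, smul_eq_zero, inv_eq_zero, norm_eq_zero] using h)
    · intro j hj
      have h1 := hchain 0 j (by omega) hj
      have h2 : A j ≤ S := hAmono (by omega)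
      have := angle_nonneg (v 0) (v j)
      have hπ : 0 < π := Real.pi_pos
      rw [hA0] at h1
      have : angle (v 0) (v j) ≤ 0 := by linarith
      linarith [angle_nonneg (v 0) (v j), Real.pi_pos]
  · push_neg at hStriv
    obtain ⟨t, ht⟩ : ∃ t : ℝ, t = S / 2 := ⟨_, rfl⟩
    have ht0 : 0 < t := by rw [ht]; positivity
    have htπ : t < π / 2 := by linarith
    -- choose k maximal with A k ≤ t
    set K : Finset ℕ := (Finset.range n).filter (fun j => A j ≤ t) with hK
    have hKne : K.Nonempty := ⟨0, by simp [hK]; constructor; omega; rw [hA0]; linarith⟩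
    set k : ℕ := K.max' hKne with hk
    have hkmem : k ∈ K := K.max'_mem hKne
    have hkn : k < n := by
      have := Finset.mem_filter.1 hkmem
      exact Finset.mem_range.1 this.1
    have hAk : A k ≤ t := (Finset.mem_filter.1 hkmem).2
    have hk1n : k + 1 < n := by
      by_contra h
      have : k = n - 1 := by omega
      rw [this] at hAk
      rw [← hS] at hAk
      linarith
    have hAk1 : t < A (k + 1) := by
      by_contra h
      push_neg at h
      have : k + 1 ∈ K := Finset.mem_filter.2 ⟨Finset.mem_range.2 hk1n, h⟩
      have := K.le_max' _ this
      omega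
    obtain ⟨s, hsdef⟩ : ∃ s : ℝ, s = t - A k := ⟨_, rfl⟩
    have hs0 : 0 ≤ s := by rw [hsdef]; linarith
    obtain ⟨θ', hθ'⟩ : ∃ θ' : ℝ, θ' = θ (k + 1) := ⟨_, rfl⟩
    have hsθ : s < θ' := by
      have := hAsucc k; rw [hsdef, hθ']; linarith
    have hθ'S : θ' ≤ S := by
      rw [hSval, hθ']
      exact Finset.single_le_sum (f := θ) (fun i _ => hθ0 i)
        (Finset.mem_Ico.2 ⟨by omega, hk1n⟩)
    have hθ'π : θ' < π := lt_of_le_of_lt hθ'S hSπ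
    have hθ'pos : 0 < θ' := lt_of_le_of_lt hs0 hsθ
    have hsinθ' : 0 < Real.sin θ' := Real.sin_pos_of_pos_of_lt_pi hθ'pos hθ'π
    obtain ⟨a, ha'⟩ : ∃ a : V, a = v k := ⟨_, rfl⟩
    obtain ⟨b, hb'⟩ : ∃ b : V, b = v (k + 1) := ⟨_, rfl⟩
    have hanorm : ‖a‖ = 1 := by rw [ha']; exact hvnorm k hkn
    have hbnorm : ‖b‖ = 1 := by rw [hb']; exact hvnorm (k + 1) hk1n
    have hab : ⟪a, b⟫ = Real.cos θ' := by
      have h0 := cos_angle a b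
      rw [hanorm, hbnorm] at h0
      have h2 : angle a b = θ' := by
        rw [ha', hb', hvangle k (k + 1) hkn hk1n, hθ', hθdef]
        simp [angle_comm]
      rw [h2] at h0; simpa using h0.symm
    have hba : ⟪b, a⟫ = Real.cos θ' := by rw [real_inner_comm]; exact hab
    obtain ⟨e0, he0⟩ : ∃ e0 : V, e0 = Real.sin (θ' - s) • a + Real.sin s • b := ⟨_, rfl⟩
    have hinner_a : ⟪e0, a⟫ = Real.sin θ' * Real.cos s := by
      simp only [he0, inner_add_left, real_inner_smul_left,
        real_inner_self_eq_norm_sq, hanorm, hba]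
      rw [Real.sin_sub]; ring
    have hinner_b : ⟪e0, b⟫ = Real.sin θ' * Real.cos (θ' - s) := by
      simp only [he0, inner_add_left, real_inner_smul_left,
        real_inner_self_eq_norm_sq, hbnorm, hab]
      rw [Real.sin_sub, Real.cos_sub]
      linear_combination (-(Real.sin s)) * Real.sin_sq_add_cos_sq θ'
    have hnorm_e0 : ‖e0‖ = Real.sin θ' := by
      have h1 : ‖e0‖ ^ 2 = Real.sin θ' ^ 2 := by
        rw [← real_inner_self_eq_norm_sq]
        simp only [he0, inner_add_left, inner_add_right, real_inner_smul_left,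
          real_inner_smul_right, real_inner_self_eq_norm_sq, hanorm, hbnorm, hab, hba,
          norm_smul, Real.norm_eq_abs, mul_one, mul_pow, sq_abs, one_pow]
        rw [Real.sin_sub]
        nlinarith [Real.sin_sq_add_cos_sq θ', Real.sin_sq_add_cos_sq s]
      nlinarith [norm_nonneg e0, hsinθ']
    obtain ⟨w, hw⟩ : ∃ w : V, w = (Real.sin θ')⁻¹ • e0 := ⟨_, rfl⟩
    have hwnorm : ‖w‖ = 1 := by
      rw [hw, norm_smul, hnorm_e0, Real.norm_eq_abs, abs_inv,
        abs_of_pos hsinθ', inv_mul_cancel₀ hsinθ'.ne']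
    have hwa : ⟪w, a⟫ = Real.cos s := by
      rw [hw, real_inner_smul_left, hinner_a, ← mul_assoc,
        inv_mul_cancel₀ hsinθ'.ne', one_mul]
    have hwb : ⟪w, b⟫ = Real.cos (θ' - s) := by
      rw [hw, real_inner_smul_left, hinner_b, ← mul_assoc,
        inv_mul_cancel₀ hsinθ'.ne', one_mul]
    have hsle : s ≤ t := by rw [hsdef]; linarith [hAnonneg k]
    have hangwa : angle w a = s := by
      unfold InnerProductGeometry.angle
      rw [hwnorm, hanorm, hwa]
      norm_num
      exact Real.arccos_cos hs0 (by linarith)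
    have hangwb : angle w b = θ' - s := by
      unfold InnerProductGeometry.angle
      rw [hwnorm, hbnorm, hwb]
      norm_num
      exact Real.arccos_cos (by linarith) (by linarith)
    have hwne : w ≠ 0 := by
      intro h; rw [h, norm_zero] at hwnorm; norm_num at hwnorm
    refine ⟨w, final w hwne ?_⟩
    intro j hj
    rcases le_or_gt j k with hjk | hjk
    · have h1 := hchain j k hjk hkn
      have h2 : angle w (v j) ≤ angle w a + angle a (v j) :=
        angle_triangle_unit hwnorm hanorm (hvnorm j hj)
      have h3 : angle a (v j) = angle (v j) (v k) := by rw [ha', angle_comm]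
      have h4 := hAnonneg j
      rw [hangwa] at h2
      rw [h3] at h2
      linarith
    · have h1 := hchain (k + 1) j hjk hj
      have h2 : angle w (v j) ≤ angle w b + angle b (v j) :=
        angle_triangle_unit hwnorm hbnorm (hvnorm j hj)
      have h3 : angle b (v j) = angle (v (k + 1)) (v j) := by rw [hb']
      have h4 : A j ≤ S := hAmono (by omega)
      have h5 := hAsucc k
      rw [hangwb, h3] at h2
      linarith

/-- The piecewise linear path through the points `p 0, p 1, p 2, …`, parametrized so that
`plPath p j = p j` at each natural number `j`, with linear interpolation in between. -/
noncomputable def plPath (p : ℕ → EuclideanSpace ℝ (Fin 3)) (t : ℝ) :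
    EuclideanSpace ℝ (Fin 3) :=
  p ⌊t⌋₊ + (t - ⌊t⌋₊) • (p (⌊t⌋₊ + 1) - p ⌊t⌋₊)

set_option maxHeartbeats 1000000 in
/-- If the total curvature (sum of exterior angles at interior vertices) of an open
polygonal curve with all consecutive vertices distinct is strictly less than `π`,
then the curve is simple (its piecewise linear parametrization is injective). -/
theorem open_polygon_simple_of_total_curvature_lt_pi (n : ℕ) (hn : 1 ≤ n)
    (p : ℕ → EuclideanSpace ℝ (Fin 3))
    (hcons : ∀ j < n, p j ≠ p (j + 1))
    (htc : ∑ m ∈ Finset.Ico 1 n,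
      InnerProductGeometry.angle (p (m + 1) - p m) (p m - p (m - 1)) < Real.pi) :
    Set.InjOn (plPath p) (Set.Icc (0 : ℝ) n) := by
  have hu : ∀ j < n, (fun j => p (j + 1) - p j) j ≠ 0 :=
    fun j hj => sub_ne_zero.2 (Ne.symm (hcons j hj))
  have htc' : ∑ m ∈ Finset.Ico 1 n,
      angle ((fun j => p (j + 1) - p j) m) ((fun j => p (j + 1) - p j) (m - 1)) < π := by
    refine lt_of_le_of_lt (le_of_eq ?_) htc
    refine Finset.sum_congr rfl fun m hm => ?_
    simp only
    have h1 : m - 1 + 1 = m := by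
      have := (Finset.mem_Ico.1 hm).1; omega
    rw [h1]
  obtain ⟨e, hpos⟩ := exists_good_direction n hn (fun j => p (j + 1) - p j) hu htc'
  set g : ℕ → ℝ := fun j => ⟪e, p j⟫ with hg
  set c : ℕ → ℝ := fun j => ⟪e, p (j + 1) - p j⟫ with hc
  have hcg : ∀ j, c j = g (j + 1) - g j := by
    intro j; rw [hc, hg]; simp [inner_sub_right]
  set f : ℝ → ℝ := fun t => ⟪e, plPath p t⟫ with hf
  have hfval : ∀ t : ℝ, f t = g ⌊t⌋₊ + (t - ⌊t⌋₊) * c ⌊t⌋₊ := by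
    intro t
    rw [hf, hg, hc]
    simp only [plPath, inner_add_right, real_inner_smul_right]
  have hvert : ∀ i j : ℕ, i < j → j ≤ n → g i < g j := by
    intro i j hij hjn
    induction j with
    | zero => omega
    | succ j ih =>
      have h1 : 0 < c j := hpos j (by omega)
      have h2 := hcg j
      rcases Nat.lt_or_ge i j with h | h
      · have := ih (by omega) (by omega)
        linarith
      · have : i = j := by omega
        subst this
        linarith
  have hmono : ∀ s t : ℝ, s ∈ Set.Icc (0 : ℝ) n → t ∈ Set.Icc (0 : ℝ) n → s < t →
      f s < f t := by
    intro s t hs ht hst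
    have hs0 : (0 : ℝ) ≤ s := hs.1
    have htn : t ≤ (n : ℝ) := ht.2
    have hfs : (⌊s⌋₊ : ℝ) ≤ s := Nat.floor_le hs0
    have hft : (⌊t⌋₊ : ℝ) ≤ t := Nat.floor_le (by linarith)
    have hfs1 : s < ⌊s⌋₊ + 1 := Nat.lt_floor_add_one s
    have hab : ⌊s⌋₊ ≤ ⌊t⌋₊ := Nat.floor_le_floor hst.le
    have htfn : ⌊t⌋₊ ≤ n := by
      have : ⌊t⌋₊ ≤ ⌊(n : ℝ)⌋₊ := Nat.floor_le_floor htn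
      simpa using this
    rcases eq_or_lt_of_le hab with heq | hlt
    · -- same segment
      have hsn : ⌊s⌋₊ < n := by
        have h1 : (⌊s⌋₊ : ℝ) < n := by linarith
        exact_mod_cast h1
      rw [hfval s, hfval t, ← heq]
      have hcpos : 0 < c ⌊s⌋₊ := hpos ⌊s⌋₊ hsn
      nlinarith [hcpos]
    · -- different segments
      have hsn : ⌊s⌋₊ < n := by omega
      have step1 : f s < g (⌊s⌋₊ + 1) := by
        rw [hfval s, hcg]
        have h1 : s - ⌊s⌋₊ < 1 := by linarith
        have h2 : 0 ≤ s - ⌊s⌋₊ := by linarith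
        have h3 : g ⌊s⌋₊ < g (⌊s⌋₊ + 1) := hvert _ _ (by omega) (by omega)
        nlinarith
      have step2 : g (⌊s⌋₊ + 1) ≤ g ⌊t⌋₊ := by
        rcases eq_or_lt_of_le (Nat.succ_le_of_lt hlt) with h | h
        · exact le_of_eq (congrArg g h)
        · exact (hvert _ _ h htfn).le
      have step3 : g ⌊t⌋₊ ≤ f t := by
        rcases lt_or_eq_of_le htfn with h | h
        · rw [hfval t]
          have hcpos : 0 < c ⌊t⌋₊ := hpos ⌊t⌋₊ h
          nlinarith
        · have htt : t = (n : ℝ) := by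
            have : (⌊t⌋₊ : ℝ) = n := by exact_mod_cast h
            linarith
          rw [hfval t]
          have : (t - ⌊t⌋₊ : ℝ) = 0 := by
            rw [htt]; simp [h]
          rw [this]; simp
      linarith
  intro s hs t ht heq
  rcases lt_trichotomy s t with h | h | h
  · exfalso
    have : f s < f t := hmono s t hs ht h
    rw [hf] at this
    simp only [heq] at this
    exact lt_irrefl _ this
  · exact h
  · exfalso
    have : f t < f s := hmono t s ht hs h
    rw [hf] at this
    simp only [heq] at this
    exact lt_irrefl _ this
end

section
/- (Discrete Fenchel) Let p₀, p₁, …, pₙ = p₀ be a closed polygon in ℝ³ with at least 3 distinct vertices and all consecutive vertices distinct. Then the total curvature (sum of exterior angles at all vertices, with indices taken cyclically) is at least 2π. -/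
/-!
Induction on the number of vertices. If the polygon turns back at every vertex, that is
`p (m + 2) = p m` for all `m`, every exterior angle is `π`. Otherwise rotate the indices so that
the vertex `p (m + 1)` with `p m ≠ p (m + 2)` comes last and delete it. For the edges
`a = p (m + 1) - p m` and `b = p (m + 2) - p (m + 1)`, the angle between `a` and `b` splits as
the angle between `a` and `a + b` plus the one between `a + b` and `b`; with the triangle
inequality for angles, the two new exterior angles at `p m` and `p (m + 2)` are therefore
bounded by the three old ones at `p m`, `p (m + 1)`, `p (m + 2)`.
-/

open Real InnerProductGeometry Function Finset

theorem Function.Periodic.sum_range_add {M : Type*} [AddCommMonoid M] {g : ℕ → M} {N : ℕ}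
    (hg : Periodic g N) (k : ℕ) : ∑ i ∈ range N, g (i + k) = ∑ i ∈ range N, g i := by
  have := congr_arg (fun s : Multiset ℕ => (s.map g).sum) (Nat.multiset_Ico_map_mod k N)
  simp only [Multiset.map_map, comp_def, hg.map_mod_nat] at this
  change ∑ i ∈ Ico k (k + N), g i = ∑ i ∈ range N, g i at this
  simpa only [add_comm, sum_Ico_eq_sum_range, add_tsub_cancel_right] using this

theorem apply_mod_ne_apply_add_one_mod {α : Type*} {p : ℕ → α} {k : ℕ}
    (hcons : ∀ j, p j ≠ p (j + 1)) (hlast : p (k + 1) ≠ p 0) (j : ℕ) :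
    p (j % (k + 2)) ≠ p ((j + 1) % (k + 2)) := by
  by_cases h : j % (k + 2) = k + 1
  · rwa [h, Nat.succ_mod_succ_eq_zero_iff.2 h]
  · have hlt := Nat.mod_lt j (by omega : 0 < k + 2)
    rw [Nat.add_mod_of_add_mod_lt (by rw [Nat.one_mod_eq_one.2 (by omega)]; omega),
      Nat.one_mod_eq_one.2 (by omega)]
    exact hcons _

section

variable {V : Type*} [NormedAddCommGroup V] [InnerProductSpace ℝ V]

theorem InnerProductGeometry.angle_add_left_add_angle_add_right (a : V) {b : V} (hb : b ≠ 0) :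
    angle (a + b) a + angle b (a + b) = angle b a := by
  have := angle_add_angle_sub_add_angle_sub_eq_pi (a + b) hb
  rw [add_sub_cancel_right, sub_add_cancel_right, angle_neg_right, angle_comm (a + b) b] at this
  linarith

theorem InnerProductGeometry.angle_add_add_angle_add_le (x a y : V) {b : V} (hb : b ≠ 0) :
    angle (a + b) x + angle y (a + b) ≤ angle a x + angle b a + angle y b := by
  have := angle_add_left_add_angle_add_right a hb
  linarith [angle_le_angle_add_angle (a + b) a x, angle_le_angle_add_angle y b (a + b)]

/-- The exterior angle at the vertex `p (m + 1)`. -/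
noncomputable def exteriorAngle (p : ℕ → V) (m : ℕ) : ℝ :=
  angle (p (m + 2) - p (m + 1)) (p (m + 1) - p m)

noncomputable def totalCurvature (p : ℕ → V) (n : ℕ) : ℝ :=
  ∑ m ∈ range n, exteriorAngle p m

theorem totalCurvature_add_const {p : ℕ → V} {n : ℕ} (hp : Periodic p n) (k : ℕ) :
    totalCurvature (fun i => p (i + k)) n = totalCurvature p n := by
  have hper : Periodic (exteriorAngle p) n := fun m => by
    simp only [exteriorAngle, add_right_comm m n, hp _]
  simpa only [totalCurvature, exteriorAngle, add_right_comm _ _ k] using hper.sum_range_add k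

theorem exteriorAngle_eq_pi {p : ℕ → V} {m : ℕ} (hcons : p m ≠ p (m + 1))
    (hback : p (m + 2) = p m) : exteriorAngle p m = π := by
  rw [exteriorAngle, hback, ← neg_sub]
  exact angle_neg_self_of_nonzero (sub_ne_zero.2 hcons.symm)

theorem totalCurvature_eq_mul_pi {p : ℕ → V} {n : ℕ} (hcons : ∀ j, p j ≠ p (j + 1))
    (hback : ∀ m, p (m + 2) = p m) : totalCurvature p n = n * π := by
  simp [totalCurvature, exteriorAngle_eq_pi (hcons _) (hback _)]

/-- `fun i => p (i % (k + 2))` is the polygon `p` with the vertex `p (k + 2)` deleted. -/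
theorem totalCurvature_mod_le {p : ℕ → V} {k : ℕ} (hp : Periodic p (k + 3))
    (hne : p (k + 2) ≠ p (k + 3)) :
    totalCurvature (fun i => p (i % (k + 2))) (k + 2) ≤ totalCurvature p (k + 3) := by
  have hhead : ∑ m ∈ range k, exteriorAngle (fun i => p (i % (k + 2))) m =
      ∑ m ∈ range k, exteriorAngle p m := by
    refine sum_congr rfl fun m hm => ?_
    have hmk := mem_range.1 hm
    simp only [exteriorAngle, Nat.mod_eq_of_lt (by omega : m < k + 2),
      Nat.mod_eq_of_lt (by omega : m + 1 < k + 2), Nat.mod_eq_of_lt (by omega : m + 2 < k + 2)]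
  have h3 : p (k + 3) = p 0 := by simpa using hp 0
  have h4 : p (k + 4) = p 1 := (congrArg p (by ring)).trans (hp 1)
  have hmod : (k + 3) % (k + 2) = 1 := by
    rw [show k + 3 = 1 + (k + 2) by ring, Nat.add_mod_right, Nat.mod_eq_of_lt (by omega)]
  have hmerge := angle_add_add_angle_add_le (p (k + 1) - p k) (p (k + 2) - p (k + 1))
    (p 1 - p 0) (sub_ne_zero.2 hne.symm)
  rw [sub_add_sub_cancel', h3] at hmerge
  rw [totalCurvature, totalCurvature, sum_range_succ, sum_range_succ, hhead, sum_range_succ,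
    sum_range_succ, sum_range_succ]
  simp only [exteriorAngle, Nat.add_assoc, Nat.reduceAdd, Nat.mod_self, hmod, h3, h4,
    Nat.mod_eq_of_lt (by omega : k < k + 2), Nat.mod_eq_of_lt (by omega : k + 1 < k + 2)]
  linarith

theorem exists_totalCurvature_le_of_ne {p : ℕ → V} {k m : ℕ} (hp : Periodic p (k + 3))
    (hcons : ∀ j, p j ≠ p (j + 1)) (hm : p (m + 2) ≠ p m) :
    ∃ q : ℕ → V, Periodic q (k + 2) ∧ (∀ j, q j ≠ q (j + 1)) ∧
      totalCurvature q (k + 2) ≤ totalCurvature p (k + 3) := by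
  set p' : ℕ → V := fun i => p (i + (m + 2))
  have hp' : Periodic p' (k + 3) := hp.add_const _
  have hcons' (j : ℕ) : p' j ≠ p' (j + 1) := by simpa only [p', add_right_comm j 1] using hcons _
  have hlast : p' (k + 1) ≠ p' 0 := by
    simp only [p']
    rw [show k + 1 + (m + 2) = m + (k + 3) by ring, hp, zero_add]
    exact hm.symm
  refine ⟨fun i => p' (i % (k + 2)), fun i => by simp only [Nat.add_mod_right],
    apply_mod_ne_apply_add_one_mod hcons' hlast, ?_⟩
  calc totalCurvature (fun i => p' (i % (k + 2))) (k + 2) ≤ totalCurvature p' (k + 3) :=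
        totalCurvature_mod_le hp' (hcons' _)
    _ = totalCurvature p (k + 3) := totalCurvature_add_const hp _

theorem two_pi_le_totalCurvature {p : ℕ → V} {n : ℕ} (hn : 2 ≤ n) (hp : Periodic p n)
    (hcons : ∀ j, p j ≠ p (j + 1)) : 2 * π ≤ totalCurvature p n := by
  induction n, hn using Nat.le_induction generalizing p with
  | base => simp [totalCurvature_eq_mul_pi hcons hp]
  | succ n hn ih =>
    by_cases hback : ∀ m, p (m + 2) = p m
    · rw [totalCurvature_eq_mul_pi hcons hback]
      have : (2 : ℝ) ≤ (n + 1 : ℕ) := by exact_mod_cast hn.trans n.le_succ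
      nlinarith [pi_pos]
    · obtain ⟨m, hm⟩ := not_forall.1 hback
      obtain ⟨k, rfl⟩ := Nat.exists_eq_add_of_le' hn
      obtain ⟨q, hq, hqcons, hle⟩ := exists_totalCurvature_le_of_ne hp hcons hm
      exact (ih hq hqcons).trans hle

end

theorem discrete_fenchel_general (n : ℕ) (hn : 3 ≤ n) (p : ℕ → EuclideanSpace ℝ (Fin 3))
    (hper : ∀ j, p (j + n) = p j)
    (hcons : ∀ j, p j ≠ p (j + 1)) :
    2 * Real.pi ≤ ∑ m ∈ Finset.range n,
      InnerProductGeometry.angle (p (m + 2) - p (m + 1)) (p (m + 1) - p m) :=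
  two_pi_le_totalCurvature (by omega) hper hcons

/-- Discrete Fenchel theorem: a closed polygon in ℝ³ (vertices indexed cyclically,
`p (j + n) = p j`), with at least 3 distinct vertices and all consecutive vertices
distinct, has total curvature (sum of its exterior angles) at least `2π`. -/
theorem discrete_fenchel (n : ℕ) (hn : 3 ≤ n) (p : ℕ → EuclideanSpace ℝ (Fin 3))
    (hper : ∀ j, p (j + n) = p j)
    (hcons : ∀ j, p j ≠ p (j + 1))
    (hdistinct : ∃ a b c : ℕ, p a ≠ p b ∧ p b ≠ p c ∧ p a ≠ p c) :
    2 * Real.pi ≤ ∑ m ∈ Finset.range n,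
      InnerProductGeometry.angle (p (m + 2) - p (m + 1)) (p (m + 1) - p m) :=
  discrete_fenchel_general n hn p hper hcons
end

section
/- Let B(t) = Σ_{j=0}^{n} C(n,j) tʲ(1-t)^{n-j} pⱼ be a Bézier curve of degree n with control points p₀,…,pₙ ∈ ℝ. Then for all t ∈ [0,1], |B(t) - L(t)| ≤ N_∞(n)·‖Δ₂P‖_∞, where L is the piecewise linear interpolant of the control points at the uniform parameters j/n, N_∞(n) = ⌊n/2⌋·⌈n/2⌉/(2n), and ‖Δ₂P‖_∞ = max_{0<m<n} |p_{m-1} - 2pₘ + p_{m+1}|. -/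
open Real

/-- Piecewise linear interpolant through the values `p 0, p 1, p 2, …` at the natural
numbers, linear in between. -/
noncomputable def plInterp (p : ℕ → ℝ) (t : ℝ) : ℝ :=
  p ⌊t⌋₊ + (t - ⌊t⌋₊) * (p (⌊t⌋₊ + 1) - p ⌊t⌋₊)

/-! ### Auxiliary machinery for the Nairn–Peters–Lutterkort bound -/

/-- Discrete Green's function for the second difference: `gfun n m j = min j m - j*m/n`. -/
noncomputable def gfun (n m j : ℕ) : ℝ := ((min j m : ℕ) : ℝ) - (j * m : ℝ) / n

lemma gfun_zero (n m : ℕ) : gfun n m 0 = 0 := by simp [gfun]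

lemma gauss' (N : ℕ) : (∑ m ∈ Finset.Ico 1 N, (m:ℝ)) = N * ((N:ℝ) - 1) / 2 := by
  induction N with
  | zero => simp
  | succ N ih =>
    rcases Nat.eq_zero_or_pos N with h | h
    · subst h; simp
    · rw [Finset.sum_Ico_succ_top (by omega), ih]; push_cast; ring

lemma wsum0 (n : ℕ) (t : ℝ) :
    (∑ j ∈ Finset.range (n+1), (n.choose j : ℝ) * t ^ j * (1 - t) ^ (n - j)) = 1 := by
  have := congrArg (Polynomial.eval t) (bernsteinPolynomial.sum ℝ n)
  simpa [bernsteinPolynomial, Polynomial.eval_finset_sum, mul_comm, mul_assoc,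
    mul_left_comm] using this

lemma wsum1 (n : ℕ) (t : ℝ) :
    (∑ j ∈ Finset.range (n+1), (j:ℝ) * ((n.choose j : ℝ) * t ^ j * (1 - t) ^ (n - j)))
      = n * t := by
  have := congrArg (Polynomial.eval t) (bernsteinPolynomial.sum_smul ℝ n)
  simpa [bernsteinPolynomial, Polynomial.eval_finset_sum, mul_comm, mul_assoc,
    mul_left_comm] using this

lemma wsum2 (n : ℕ) (hn : 1 ≤ n) (t : ℝ) :
    (∑ j ∈ Finset.range (n+1),
        (j:ℝ) * ((j:ℝ)-1) * ((n.choose j : ℝ) * t ^ j * (1 - t) ^ (n - j)))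
      = n * ((n:ℝ)-1) * t^2 := by
  have h := congrArg (Polynomial.eval t) (bernsteinPolynomial.sum_mul_smul ℝ n)
  have h2 : (∑ j ∈ Finset.range (n+1),
      ((j*(j-1) : ℕ):ℝ) * ((n.choose j : ℝ) * t ^ j * (1 - t) ^ (n - j)))
      = ((n*(n-1) : ℕ):ℝ) * t^2 := by
    simpa [bernsteinPolynomial, Polynomial.eval_finset_sum, mul_comm, mul_assoc,
      mul_left_comm] using h
  have e2 : ((n*(n-1) : ℕ):ℝ) = n * ((n:ℝ)-1) := by
    rcases n with _ | n
    · omega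
    · push_cast [Nat.succ_sub_one]; ring
  rw [← e2, ← h2]
  refine Finset.sum_congr rfl fun j _ => ?_
  rcases j with _ | j
  · simp
  · push_cast [Nat.succ_sub_one]; ring

lemma wsumE (n : ℕ) (hn : 1 ≤ n) (t : ℝ) :
    (∑ j ∈ Finset.range (n+1),
        ((n.choose j : ℝ) * t ^ j * (1 - t) ^ (n - j)) * ((j:ℝ) * ((n:ℝ) - j) / 2))
      = n * ((n:ℝ)-1) * t * (1-t) / 2 := by
  have e : ∀ j ∈ Finset.range (n+1),
      ((n.choose j : ℝ) * t ^ j * (1 - t) ^ (n - j)) * ((j:ℝ) * ((n:ℝ) - j) / 2)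
      = ((n:ℝ)-1)/2 * ((j:ℝ) * ((n.choose j : ℝ) * t ^ j * (1 - t) ^ (n - j)))
        - 1/2 * ((j:ℝ) * ((j:ℝ)-1) * ((n.choose j : ℝ) * t ^ j * (1 - t) ^ (n - j))) :=
    fun j _ => by ring
  rw [Finset.sum_congr rfl e, Finset.sum_sub_distrib, ← Finset.mul_sum, ← Finset.mul_sum,
    wsum1, wsum2 n hn]
  ring

lemma gfun_delta (n m j : ℕ) :
    gfun n m j - 2 * gfun n m (j+1) + gfun n m (j+2) = if m = j+1 then -1 else 0 := by
  unfold gfun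
  rcases lt_trichotomy m (j+1) with h | h | h
  · have h1 : min j m = m := by omega
    have h2 : min (j+1) m = m := by omega
    have h3 : min (j+2) m = m := by omega
    rw [h1, h2, h3, if_neg (by omega)]
    push_cast; ring
  · have h1 : min j m = j := by omega
    have h2 : min (j+1) m = j+1 := by omega
    have h3 : min (j+2) m = j+1 := by omega
    rw [h1, h2, h3, if_pos h]
    push_cast; ring
  · have h1 : min j m = j := by omega
    have h2 : min (j+1) m = j+1 := by omega
    have h3 : min (j+2) m = j+2 := by omega
    rw [h1, h2, h3, if_neg (by omega)]
    push_cast; ring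

lemma delta_sum (n : ℕ) (c : ℕ → ℝ) (j : ℕ) (hj : j + 2 ≤ n) :
    (∑ m ∈ Finset.Ico 1 n, c m * (gfun n m j - 2 * gfun n m (j+1) + gfun n m (j+2)))
      = -(c (j+1)) := by
  rw [Finset.sum_congr rfl (fun m _ => by rw [gfun_delta])]
  rw [Finset.sum_eq_single (j+1)]
  · simp
  · intro b _ hb; simp [if_neg hb]
  · intro hmem
    exact absurd (Finset.mem_Ico.mpr ⟨by omega, by omega⟩) hmem

/-- Decomposition: control points = linear part minus combination of Green's functions. -/
lemma decomp (n : ℕ) (p : ℕ → ℝ) :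
    ∃ a b : ℝ, ∀ j ≤ n, p j = a + b * j -
      ∑ m ∈ Finset.Ico 1 n, (p (m-1) - 2 * p m + p (m+1)) * gfun n m j := by
  set c : ℕ → ℝ := fun m => p (m-1) - 2 * p m + p (m+1) with hc
  set S : ℕ → ℝ := fun j => ∑ m ∈ Finset.Ico 1 n, c m * gfun n m j with hS
  refine ⟨p 0, p 1 - p 0 + S 1, fun j hj => ?_⟩
  induction j using Nat.strong_induction_on with
  | _ j ih =>
    match j, hj with
    | 0, _ => simp [hS, gfun_zero]
    | 1, _ => push_cast; ring
    | (i+2), hj =>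
      have e1 := ih i (by omega) (by omega)
      have e2 := ih (i+1) (by omega) (by omega)
      have hd := delta_sum n c i (by omega)
      have hrec : S i - 2 * S (i+1) + S (i+2) = -(c (i+1)) := by
        simp only [hS, Finset.mul_sum, ← Finset.sum_sub_distrib, ← Finset.sum_add_distrib]
        rw [← hd]
        exact Finset.sum_congr rfl fun m _ => by ring
      have hcv : c (i+1) = p i - 2 * p (i+1) + p (i+2) := by simp [hc]
      have hSi2 : (∑ m ∈ Finset.Ico 1 n, c m * gfun n m (i+2)) = S (i+2) := rfl
      rw [hSi2]
      push_cast at e1 e2 ⊢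
      nlinarith [hrec, hcv, e1, e2]

lemma gfun_le1 (n m j : ℕ) (hn : 1 ≤ n) : gfun n m j ≤ (j:ℝ) * ((n:ℝ) - m) / n := by
  have hn' : (0:ℝ) < n := by exact_mod_cast hn
  have h1 : ((min j m : ℕ):ℝ) ≤ (j:ℝ) := by exact_mod_cast Nat.min_le_left j m
  have key : (j:ℝ) * ((n:ℝ) - m) / n - (((min j m : ℕ):ℝ) - (j*m:ℝ)/n)
      = (j:ℝ) - ((min j m : ℕ):ℝ) := by field_simp; ring
  unfold gfun; linarith [key]

lemma gfun_le2 (n m j : ℕ) (hn : 1 ≤ n) : gfun n m j ≤ (m:ℝ) * ((n:ℝ) - j) / n := by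
  have hn' : (0:ℝ) < n := by exact_mod_cast hn
  have h1 : ((min j m : ℕ):ℝ) ≤ (m:ℝ) := by exact_mod_cast Nat.min_le_right j m
  have key : (m:ℝ) * ((n:ℝ) - j) / n - (((min j m : ℕ):ℝ) - (j*m:ℝ)/n)
      = (m:ℝ) - ((min j m : ℕ):ℝ) := by field_simp; ring
  unfold gfun; linarith [key]

lemma min_lin (n m : ℕ) (x : ℝ) (hn : 1 ≤ n) (hm : m ≤ n) :
    min ((x * ((n:ℝ) - m)) / n) ((m:ℝ) * ((n:ℝ) - x) / n) = min x (m:ℝ) - x * m / n := by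
  have hn' : (0:ℝ) < n := by exact_mod_cast hn
  have hmn : (m:ℝ) ≤ n := by exact_mod_cast hm
  rcases le_total x (m:ℝ) with h | h
  · rw [min_eq_left h, min_eq_left]
    · field_simp
    · rw [div_le_div_iff₀ hn' hn']
      nlinarith [mul_nonneg (mul_nonneg hn'.le hn'.le) (sub_nonneg.2 h)]
  · rw [min_eq_right h, min_eq_right]
    · field_simp
    · rw [div_le_div_iff₀ hn' hn']
      nlinarith [mul_nonneg (mul_nonneg hn'.le hn'.le) (sub_nonneg.2 h)]

/-- The Bézier average of a Green's function is below the continuous min function. -/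
lemma Bg_le (n m : ℕ) (t : ℝ) (hn : 1 ≤ n) (hm : m ≤ n) (ht0 : 0 ≤ t) (ht1 : t ≤ 1) :
    (∑ j ∈ Finset.range (n+1), ((n.choose j : ℝ) * t ^ j * (1 - t) ^ (n - j)) * gfun n m j)
      ≤ min ((n:ℝ)*t) (m:ℝ) - ((n:ℝ)*t) * m / n := by
  have hn' : (0:ℝ) < n := by exact_mod_cast hn
  have hw : ∀ j, 0 ≤ (n.choose j : ℝ) * t ^ j * (1 - t) ^ (n - j) := fun j =>
    mul_nonneg (mul_nonneg (by positivity) (pow_nonneg ht0 _)) (pow_nonneg (by linarith) _)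
  have b1 : (∑ j ∈ Finset.range (n+1), ((n.choose j : ℝ) * t ^ j * (1 - t) ^ (n - j)) * gfun n m j)
      ≤ ((n:ℝ)*t) * ((n:ℝ) - m) / n := by
    calc (∑ j ∈ Finset.range (n+1), ((n.choose j : ℝ) * t ^ j * (1 - t) ^ (n - j)) * gfun n m j)
        ≤ ∑ j ∈ Finset.range (n+1),
            ((n.choose j : ℝ) * t ^ j * (1 - t) ^ (n - j)) * ((j:ℝ) * ((n:ℝ) - m) / n) :=
          Finset.sum_le_sum fun j _ => mul_le_mul_of_nonneg_left (gfun_le1 n m j hn) (hw j)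
      _ = ((n:ℝ) - m) / n * (∑ j ∈ Finset.range (n+1),
            (j:ℝ) * ((n.choose j : ℝ) * t ^ j * (1 - t) ^ (n - j))) := by
          rw [Finset.mul_sum]; exact Finset.sum_congr rfl fun j _ => by ring
      _ = ((n:ℝ)*t) * ((n:ℝ) - m) / n := by rw [wsum1]; ring
  have b2 : (∑ j ∈ Finset.range (n+1), ((n.choose j : ℝ) * t ^ j * (1 - t) ^ (n - j)) * gfun n m j)
      ≤ (m:ℝ) * ((n:ℝ) - (n:ℝ)*t) / n := by
    calc (∑ j ∈ Finset.range (n+1), ((n.choose j : ℝ) * t ^ j * (1 - t) ^ (n - j)) * gfun n m j)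
        ≤ ∑ j ∈ Finset.range (n+1),
            ((n.choose j : ℝ) * t ^ j * (1 - t) ^ (n - j)) * ((m:ℝ) * ((n:ℝ) - j) / n) :=
          Finset.sum_le_sum fun j _ => mul_le_mul_of_nonneg_left (gfun_le2 n m j hn) (hw j)
      _ = (m:ℝ) * (∑ j ∈ Finset.range (n+1), (n.choose j : ℝ) * t ^ j * (1 - t) ^ (n - j))
          - (m:ℝ)/n * (∑ j ∈ Finset.range (n+1),
            (j:ℝ) * ((n.choose j : ℝ) * t ^ j * (1 - t) ^ (n - j))) := by
          rw [Finset.mul_sum, Finset.mul_sum, ← Finset.sum_sub_distrib]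
          refine Finset.sum_congr rfl fun j _ => ?_
          field_simp
      _ = (m:ℝ) * ((n:ℝ) - (n:ℝ)*t) / n := by rw [wsum0, wsum1]; field_simp
  rw [← min_lin n m ((n:ℝ)*t) hn hm]
  exact le_min b1 b2

lemma Lg_eq (n m k : ℕ) (x : ℝ) (hn : 1 ≤ n) (hk : (k:ℝ) ≤ x) (hk2 : x < (k:ℝ) + 1) :
    gfun n m k + (x - k) * (gfun n m (k+1) - gfun n m k) = min x (m:ℝ) - x * m / n := by
  have hn' : (0:ℝ) < n := by exact_mod_cast hn
  rcases le_or_gt m k with h | h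
  · have h1 : min k m = m := by omega
    have h2 : min (k+1) m = m := by omega
    have hxm : (m:ℝ) ≤ x := le_trans (by exact_mod_cast h) hk
    rw [min_eq_right hxm]
    unfold gfun
    rw [h1, h2]
    push_cast
    field_simp
    ring
  · have h1 : min k m = k := by omega
    have h2 : min (k+1) m = k+1 := by omega
    have hxm : x ≤ (m:ℝ) := le_of_lt (lt_of_lt_of_le hk2 (by exact_mod_cast h))
    rw [min_eq_left hxm]
    unfold gfun
    rw [h1, h2]
    push_cast
    field_simp
    ring

lemma sum_min (n k : ℕ) (x : ℝ) (hn : 1 ≤ n) (hk1 : k + 1 ≤ n) (hk : (k:ℝ) ≤ x)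
    (hk2 : x < (k:ℝ) + 1) :
    (∑ m ∈ Finset.Ico 1 n, (min x (m:ℝ) - x * m / n))
      = (k:ℝ) * (k+1) / 2 + x * ((n:ℝ) - 1 - k) - x * ((n:ℝ) - 1) / 2 := by
  have hn' : (0:ℝ) < n := by exact_mod_cast hn
  have hsplit : Finset.Ico 1 n = Finset.Ico 1 (k+1) ∪ Finset.Ico (k+1) n :=
    (Finset.Ico_union_Ico_eq_Ico (by omega) hk1).symm
  rw [Finset.sum_sub_distrib]
  have e2 : (∑ m ∈ Finset.Ico 1 n, x * (m:ℝ) / n) = x * ((n:ℝ) - 1) / 2 := by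
    have e : ∀ m ∈ Finset.Ico 1 n, x * (m:ℝ) / n = x/n * m := fun m _ => by ring
    rw [Finset.sum_congr rfl e, ← Finset.mul_sum, gauss']
    field_simp
  rw [e2]
  have e1 : (∑ m ∈ Finset.Ico 1 n, min x (m:ℝ)) = (k:ℝ) * (k+1) / 2 + x * ((n:ℝ) - 1 - k) := by
    rw [hsplit, Finset.sum_union (Finset.Ico_disjoint_Ico_consecutive 1 (k+1) n)]
    have f1 : (∑ m ∈ Finset.Ico 1 (k+1), min x (m:ℝ)) = (k:ℝ) * (k+1) / 2 := by
      have hcg : ∀ m ∈ Finset.Ico 1 (k+1), min x (m:ℝ) = (m:ℝ) := by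
        intro m hm
        rw [Finset.mem_Ico] at hm
        refine min_eq_right (le_trans ?_ hk)
        exact_mod_cast Nat.lt_succ_iff.mp hm.2
      rw [Finset.sum_congr rfl hcg, gauss' (k+1)]
      push_cast; ring
    have f2 : (∑ m ∈ Finset.Ico (k+1) n, min x (m:ℝ)) = x * ((n:ℝ) - 1 - k) := by
      have hcg : ∀ m ∈ Finset.Ico (k+1) n, min x (m:ℝ) = x := by
        intro m hm
        rw [Finset.mem_Ico] at hm
        refine min_eq_left (le_of_lt (lt_of_lt_of_le hk2 ?_))
        have : ((k:ℝ)+1) ≤ (m:ℝ) := by exact_mod_cast hm.1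
        linarith
      rw [Finset.sum_congr rfl hcg, Finset.sum_const, Nat.card_Ico, nsmul_eq_mul]
      have hc : ((n - (k+1) : ℕ):ℝ) = (n:ℝ) - 1 - k := by push_cast [Nat.cast_sub hk1]; ring
      rw [hc]; ring
    rw [f1, f2]
  rw [e1]

lemma sum_gfun (n j : ℕ) (hn : 1 ≤ n) (hj : j ≤ n) :
    (∑ m ∈ Finset.Ico 1 n, gfun n m j) = (j:ℝ) * ((n:ℝ) - j) / 2 := by
  have hn' : (0:ℝ) < n := by exact_mod_cast hn
  unfold gfun
  rw [Finset.sum_sub_distrib]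
  have e2 : (∑ m ∈ Finset.Ico 1 n, ((j:ℝ) * m : ℝ) / n) = (j:ℝ) * ((n:ℝ) - 1) / 2 := by
    have e : ∀ m ∈ Finset.Ico 1 n, ((j:ℝ) * m) / n = (j:ℝ)/n * m := fun m _ => by ring
    rw [Finset.sum_congr rfl e, ← Finset.mul_sum, gauss']
    field_simp
  have e1 : (∑ m ∈ Finset.Ico 1 n, ((min j m : ℕ):ℝ))
      = (j:ℝ)*((j:ℝ)-1)/2 + (j:ℝ) * ((n:ℝ) - j) := by
    rcases Nat.eq_zero_or_pos j with h0 | h0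
    · subst h0; simp
    · have hsplit : Finset.Ico 1 n = Finset.Ico 1 j ∪ Finset.Ico j n :=
        (Finset.Ico_union_Ico_eq_Ico (by omega) hj).symm
      rw [hsplit, Finset.sum_union (Finset.Ico_disjoint_Ico_consecutive 1 j n)]
      have f1 : (∑ m ∈ Finset.Ico 1 j, ((min j m : ℕ):ℝ)) = (j:ℝ)*((j:ℝ)-1)/2 := by
        have hcg : ∀ m ∈ Finset.Ico 1 j, ((min j m : ℕ):ℝ) = (m:ℝ) := by
          intro m hm
          rw [Finset.mem_Ico] at hm
          congr 1
          omega
        rw [Finset.sum_congr rfl hcg, gauss' j]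
      have f2 : (∑ m ∈ Finset.Ico j n, ((min j m : ℕ):ℝ)) = (j:ℝ) * ((n:ℝ) - j) := by
        have hcg : ∀ m ∈ Finset.Ico j n, ((min j m : ℕ):ℝ) = (j:ℝ) := by
          intro m hm
          rw [Finset.mem_Ico] at hm
          congr 1
          omega
        rw [Finset.sum_congr rfl hcg, Finset.sum_const, Nat.card_Ico, nsmul_eq_mul]
        rw [Nat.cast_sub hj]; ring
      rw [f1, f2]
  rw [e1, e2]
  ring

lemma nat_bound (n k : ℕ) (hk : k ≤ n) : k * (n - k) ≤ (n / 2) * ((n + 1) / 2) := by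
  obtain ⟨b, hb⟩ : ∃ b, n = k + b := ⟨n - k, by omega⟩
  subst hb
  rw [show k + b - k = b by omega]
  obtain ⟨a, ha | ha⟩ := Nat.even_or_odd' (k + b)
  · have h1 : (k+b) / 2 = a := by omega
    have h2 : (k+b+1) / 2 = a := by omega
    rw [h1, h2]
    zify
    nlinarith [sq_nonneg ((k:ℤ) - b), ha]
  · have h1 : (k+b) / 2 = a := by omega
    have h2 : (k+b+1) / 2 = a + 1 := by omega
    rw [h1, h2]
    zify
    nlinarith [sq_nonneg ((k:ℤ) - b), ha]

/-- Nairn–Peters–Lutterkort bound: for a scalar Bézier curve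
`B t = ∑ C(n,j) tʲ(1-t)^{n-j} p j` of degree `n` and the piecewise linear interpolant `L`
of its control points at the uniform parameters `j/n`, we have for all `t ∈ [0,1]`:
`|B t - L t| ≤ N_∞(n)·‖Δ₂P‖_∞` with `N_∞(n) = ⌊n/2⌋⌈n/2⌉/(2n)` and
`‖Δ₂P‖_∞ = max_{0<m<n} |p (m-1) - 2 p m + p (m+1)|`. -/
theorem bezier_control_polygon_distance (n : ℕ) (hn : 2 ≤ n) (p : ℕ → ℝ) :
    ∀ t ∈ Set.Icc (0 : ℝ) 1,
      |(∑ j ∈ Finset.range (n + 1), (n.choose j : ℝ) * t ^ j * (1 - t) ^ (n - j) * p j) -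
          plInterp p ((n : ℝ) * t)| ≤
        ((n / 2 : ℕ) : ℝ) * (((n + 1) / 2 : ℕ) : ℝ) / (2 * (n : ℝ)) *
          (Finset.Ico 1 n).sup' (Finset.nonempty_Ico.mpr (by omega))
            (fun m => |p (m - 1) - 2 * p m + p (m + 1)|) := by
  intro t ht
  obtain ⟨ht0, ht1⟩ := ht
  have hn1 : 1 ≤ n := by omega
  have hn' : (0:ℝ) < n := by exact_mod_cast hn1
  set c : ℕ → ℝ := fun m => p (m-1) - 2 * p m + p (m+1) with hc
  set K := (Finset.Ico 1 n).sup' (Finset.nonempty_Ico.mpr (by omega))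
      (fun m => |p (m - 1) - 2 * p m + p (m + 1)|) with hK
  have hCle : ∀ m ∈ Finset.Ico 1 n, |c m| ≤ K := fun m hm =>
    Finset.le_sup' (fun m => |p (m - 1) - 2 * p m + p (m + 1)|) hm
  have hK0 : 0 ≤ K := by
    refine le_trans (abs_nonneg (c 1)) (hCle 1 ?_)
    exact Finset.mem_Ico.mpr ⟨le_refl 1, by omega⟩
  have hNval : 0 ≤ ((n / 2 : ℕ) : ℝ) * (((n + 1) / 2 : ℕ) : ℝ) / (2 * (n : ℝ)) := by
    positivity
  rcases eq_or_lt_of_le ht1 with h1 | h1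
  · -- t = 1
    subst h1
    have hsum : (∑ j ∈ Finset.range (n + 1),
        (n.choose j : ℝ) * (1:ℝ) ^ j * (1 - 1) ^ (n - j) * p j) = p n := by
      rw [Finset.sum_eq_single n]
      · simp
      · intro j hj hjne
        rw [Finset.mem_range] at hj
        have : (1 - (1:ℝ)) ^ (n - j) = 0 := by
          rw [sub_self]
          exact zero_pow (by omega)
        rw [this]
        ring
      · intro h; exact absurd (Finset.self_mem_range_succ n) h
    have hpl : plInterp p ((n:ℝ) * 1) = p n := by
      rw [mul_one]
      simp [plInterp, Nat.floor_natCast]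
    rw [hsum, hpl, sub_self, abs_zero]
    exact mul_nonneg hNval hK0
  · -- t < 1
    set x : ℝ := (n:ℝ) * t with hx
    have hx0 : 0 ≤ x := by positivity
    have hxn : x < n := by
      rw [hx]
      nlinarith
    set k : ℕ := ⌊x⌋₊ with hkdef
    have hkx : (k:ℝ) ≤ x := Nat.floor_le hx0
    have hkx2 : x < (k:ℝ) + 1 := Nat.lt_floor_add_one x
    have hkn : k + 1 ≤ n := by
      have : k < n := (Nat.floor_lt hx0).mpr hxn
      omega
    obtain ⟨a, b, hdec⟩ := decomp n p
    -- rewrite hdec's sum using c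
    have hdec' : ∀ j ≤ n, p j = a + b * j - ∑ m ∈ Finset.Ico 1 n, c m * gfun n m j := by
      intro j hj
      rw [hdec j hj]
    -- the Bézier sum
    have hB : (∑ j ∈ Finset.range (n + 1), (n.choose j : ℝ) * t ^ j * (1 - t) ^ (n - j) * p j)
        = a + b * x - ∑ m ∈ Finset.Ico 1 n, c m *
            (∑ j ∈ Finset.range (n+1), ((n.choose j : ℝ) * t ^ j * (1 - t) ^ (n - j)) * gfun n m j) := by
      have e : ∀ j ∈ Finset.range (n+1),
          (n.choose j : ℝ) * t ^ j * (1 - t) ^ (n - j) * p j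
          = a * ((n.choose j : ℝ) * t ^ j * (1 - t) ^ (n - j))
            + b * ((j:ℝ) * ((n.choose j : ℝ) * t ^ j * (1 - t) ^ (n - j)))
            - ∑ m ∈ Finset.Ico 1 n, c m * (((n.choose j : ℝ) * t ^ j * (1 - t) ^ (n - j)) * gfun n m j) := by
        intro j hj
        rw [Finset.mem_range] at hj
        rw [hdec' j (by omega), mul_sub, Finset.mul_sum]
        congr 1
        · ring
        · exact Finset.sum_congr rfl fun m _ => by ring
      rw [Finset.sum_congr rfl e, Finset.sum_sub_distrib, Finset.sum_add_distrib,
        ← Finset.mul_sum, ← Finset.mul_sum, wsum0, wsum1, Finset.sum_comm]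
      congr 1
      · rw [mul_one]
      · exact Finset.sum_congr rfl fun m _ => (Finset.mul_sum _ _ _).symm
    -- the interpolant
    have hplx : plInterp p x = p k + (x - (k:ℝ)) * (p (k+1) - p k) := rfl
    have hsplitL : (∑ m ∈ Finset.Ico 1 n, c m *
          (gfun n m k + (x - k) * (gfun n m (k+1) - gfun n m k)))
        = (∑ m ∈ Finset.Ico 1 n, c m * gfun n m k)
          + (x - k) * ((∑ m ∈ Finset.Ico 1 n, c m * gfun n m (k+1))
            - (∑ m ∈ Finset.Ico 1 n, c m * gfun n m k)) := by
      calc (∑ m ∈ Finset.Ico 1 n, c m *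
            (gfun n m k + (x - k) * (gfun n m (k+1) - gfun n m k)))
          = ∑ m ∈ Finset.Ico 1 n, (c m * gfun n m k
              + (x - k) * (c m * gfun n m (k+1) - c m * gfun n m k)) :=
            Finset.sum_congr rfl fun m _ => by ring
        _ = _ := by
            rw [Finset.sum_add_distrib, ← Finset.mul_sum, Finset.sum_sub_distrib]
    have hL : plInterp p x = a + b * x - ∑ m ∈ Finset.Ico 1 n, c m *
        (gfun n m k + (x - k) * (gfun n m (k+1) - gfun n m k)) := by
      rw [hplx, hdec' k (by omega), hdec' (k+1) hkn, hsplitL]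
      push_cast
      ring
    -- difference as a sum
    rw [hB, hL]
    have hdiff : (a + b * x - ∑ m ∈ Finset.Ico 1 n, c m *
            (∑ j ∈ Finset.range (n+1),
              ((n.choose j : ℝ) * t ^ j * (1 - t) ^ (n - j)) * gfun n m j))
          - (a + b * x - ∑ m ∈ Finset.Ico 1 n, c m *
            (gfun n m k + (x - k) * (gfun n m (k+1) - gfun n m k)))
        = ∑ m ∈ Finset.Ico 1 n, c m *
            ((gfun n m k + (x - k) * (gfun n m (k+1) - gfun n m k))
              - ∑ j ∈ Finset.range (n+1),
                ((n.choose j : ℝ) * t ^ j * (1 - t) ^ (n - j)) * gfun n m j) := by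
      have e : ∀ m ∈ Finset.Ico 1 n,
          c m * ((gfun n m k + (x - k) * (gfun n m (k+1) - gfun n m k))
            - ∑ j ∈ Finset.range (n+1),
              ((n.choose j : ℝ) * t ^ j * (1 - t) ^ (n - j)) * gfun n m j)
          = c m * (gfun n m k + (x - k) * (gfun n m (k+1) - gfun n m k))
            - c m * ∑ j ∈ Finset.range (n+1),
              ((n.choose j : ℝ) * t ^ j * (1 - t) ^ (n - j)) * gfun n m j :=
        fun m _ => by ring
      rw [Finset.sum_congr rfl e, Finset.sum_sub_distrib]
      ring
    rw [hdiff]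
    -- per-term nonnegativity of the bracket and its value
    have hLgval : ∀ m ∈ Finset.Ico 1 n,
        gfun n m k + (x - k) * (gfun n m (k+1) - gfun n m k) = min x (m:ℝ) - x * m / n :=
      fun m _ => Lg_eq n m k x hn1 hkx hkx2
    have hd_nonneg : ∀ m ∈ Finset.Ico 1 n,
        0 ≤ (gfun n m k + (x - k) * (gfun n m (k+1) - gfun n m k))
          - ∑ j ∈ Finset.range (n+1),
            ((n.choose j : ℝ) * t ^ j * (1 - t) ^ (n - j)) * gfun n m j := by
      intro m hm
      rw [Finset.mem_Ico] at hm
      have := Bg_le n m t hn1 (by omega) ht0 ht1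
      rw [hLgval m (Finset.mem_Ico.mpr hm)]
      rw [sub_nonneg]
      exact this
    -- bound by K times the sum of brackets
    calc |∑ m ∈ Finset.Ico 1 n, c m *
            ((gfun n m k + (x - k) * (gfun n m (k+1) - gfun n m k))
              - ∑ j ∈ Finset.range (n+1),
                ((n.choose j : ℝ) * t ^ j * (1 - t) ^ (n - j)) * gfun n m j)|
        ≤ ∑ m ∈ Finset.Ico 1 n, |c m *
            ((gfun n m k + (x - k) * (gfun n m (k+1) - gfun n m k))
              - ∑ j ∈ Finset.range (n+1),
                ((n.choose j : ℝ) * t ^ j * (1 - t) ^ (n - j)) * gfun n m j)| :=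
          Finset.abs_sum_le_sum_abs _ _
      _ ≤ ∑ m ∈ Finset.Ico 1 n, K *
            ((gfun n m k + (x - k) * (gfun n m (k+1) - gfun n m k))
              - ∑ j ∈ Finset.range (n+1),
                ((n.choose j : ℝ) * t ^ j * (1 - t) ^ (n - j)) * gfun n m j) := by
          refine Finset.sum_le_sum fun m hm => ?_
          rw [abs_mul, abs_of_nonneg (hd_nonneg m hm)]
          exact mul_le_mul_of_nonneg_right (hCle m hm) (hd_nonneg m hm)
      _ = K * ∑ m ∈ Finset.Ico 1 n,
            ((gfun n m k + (x - k) * (gfun n m (k+1) - gfun n m k))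
              - ∑ j ∈ Finset.range (n+1),
                ((n.choose j : ℝ) * t ^ j * (1 - t) ^ (n - j)) * gfun n m j) :=
          (Finset.mul_sum _ _ _).symm
      _ ≤ ((n / 2 : ℕ) : ℝ) * (((n + 1) / 2 : ℕ) : ℝ) / (2 * (n : ℝ)) * K := by
          rw [mul_comm (((n / 2 : ℕ) : ℝ) * (((n + 1) / 2 : ℕ) : ℝ) / (2 * (n : ℝ))) K]
          refine mul_le_mul_of_nonneg_left ?_ hK0
          -- compute the sum of brackets
          have hsum1 : (∑ m ∈ Finset.Ico 1 n,
              (gfun n m k + (x - k) * (gfun n m (k+1) - gfun n m k)))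
              = (k:ℝ) * (k+1) / 2 + x * ((n:ℝ) - 1 - k) - x * ((n:ℝ) - 1) / 2 := by
            rw [Finset.sum_congr rfl hLgval]
            exact sum_min n k x hn1 hkn hkx hkx2
          have hsum2 : (∑ m ∈ Finset.Ico 1 n, ∑ j ∈ Finset.range (n+1),
              ((n.choose j : ℝ) * t ^ j * (1 - t) ^ (n - j)) * gfun n m j)
              = (n:ℝ) * ((n:ℝ)-1) * t * (1-t) / 2 := by
            rw [Finset.sum_comm]
            rw [Finset.sum_congr rfl (fun j hj => ?_), wsumE n hn1 t]
            rw [← Finset.mul_sum, sum_gfun n j hn1 (by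
              rw [Finset.mem_range] at hj; omega)]
          rw [Finset.sum_sub_distrib, hsum1, hsum2]
          -- final elementary inequality
          have hA1 : (k:ℝ) * ((n:ℝ) - k) ≤ ((n / 2 : ℕ) : ℝ) * (((n + 1) / 2 : ℕ) : ℝ) := by
            have h := nat_bound n k (by omega)
            have : ((k * (n - k) : ℕ) : ℝ) = (k:ℝ) * ((n:ℝ) - k) := by
              push_cast [Nat.cast_sub (show k ≤ n by omega)]; ring
            rw [← this]
            exact_mod_cast h
          have hA2 : ((k:ℝ)+1) * ((n:ℝ) - k - 1) ≤ ((n / 2 : ℕ) : ℝ) * (((n + 1) / 2 : ℕ) : ℝ) := by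
            have h := nat_bound n (k+1) hkn
            have : (((k+1) * (n - (k+1)) : ℕ) : ℝ) = ((k:ℝ)+1) * ((n:ℝ) - k - 1) := by
              push_cast [Nat.cast_sub hkn]; ring
            rw [← this]
            exact_mod_cast h
          set AB := ((n / 2 : ℕ) : ℝ) * (((n + 1) / 2 : ℕ) : ℝ) with hAB
          set s : ℝ := x - k with hs
          have hs0 : 0 ≤ s := by rw [hs]; linarith
          have hs1 : s ≤ 1 := by rw [hs]; linarith
          rw [← sub_nonneg]
          have idty : AB / (2 * (n:ℝ))
              - ((k:ℝ) * (k+1) / 2 + x * ((n:ℝ) - 1 - k) - x * ((n:ℝ) - 1) / 2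
                - (n:ℝ) * ((n:ℝ)-1) * t * (1-t) / 2)
              = ((1-s) * (AB - (k:ℝ) * ((n:ℝ) - k)) + s * (AB - ((k:ℝ)+1) * ((n:ℝ) - k - 1))
                + ((n:ℝ)-1) * s * (1-s)) / (2 * (n:ℝ)) := by
            rw [hs, hx]
            field_simp
            ring
          rw [idty]
          apply div_nonneg _ (by positivity)
          have t1 : 0 ≤ (1-s) * (AB - (k:ℝ) * ((n:ℝ) - k)) :=
            mul_nonneg (by linarith) (by linarith)
          have t2 : 0 ≤ s * (AB - ((k:ℝ)+1) * ((n:ℝ) - k - 1)) :=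
            mul_nonneg hs0 (by linarith)
          have t3 : 0 ≤ ((n:ℝ)-1) * s * (1-s) := by
            have : (1:ℝ) ≤ n := by exact_mod_cast hn1
            apply mul_nonneg (mul_nonneg (by linarith) hs0) (by linarith)
          linarith
end

section
/- Let B : [0,1] → ℝ³ be continuously differentiable with σ := min_{t∈[0,1]} ‖B'(t)‖ > 0, and let P : [0,1] → ℝ³ be differentiable at t with ‖B'(t) - P'(t)‖ ≤ δ < σ. Then P'(t) ≠ 0 and the angle θ(t) between B'(t) and P'(t) satisfies 1 - cos θ(t) ≤ 2δ/σ. In particular, if δ < (σ/2)(1 - √3/2), then θ(t) < π/6. -/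
open Real InnerProductGeometry

/-! Write `x = B'(t)` and `y = P'(t)`. Since `⟪x, y⟫ = ‖y‖² + ⟪x - y, y⟫`, the defect
`‖x‖‖y‖ - ⟪x, y⟫` splits as `(‖x‖ - ‖y‖)‖y‖ - ⟪x - y, y⟫`, and both terms are at most
`‖x - y‖‖y‖`. Dividing by `‖x‖‖y‖` gives `1 - cos θ ≤ 2‖x - y‖/‖x‖ ≤ 2δ/σ`; the bound
`θ < π/6` follows because cosine is decreasing on `[0, π]` and `cos (π/6) = √3/2`. -/

namespace InnerProductGeometry

open scoped RealInnerProductSpace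

variable {V : Type*} [NormedAddCommGroup V] [InnerProductSpace ℝ V]

theorem norm_mul_norm_sub_inner_le (x y : V) :
    ‖x‖ * ‖y‖ - ⟪x, y⟫ ≤ 2 * ‖x - y‖ * ‖y‖ := by
  have hsplit : ‖x‖ * ‖y‖ - ⟪x, y⟫ = (‖x‖ - ‖y‖) * ‖y‖ - ⟪x - y, y⟫ := by
    rw [inner_sub_left, real_inner_self_eq_norm_sq]; ring
  have hnorm : (‖x‖ - ‖y‖) * ‖y‖ ≤ ‖x - y‖ * ‖y‖ :=
    mul_le_mul_of_nonneg_right (norm_sub_norm_le x y) (norm_nonneg y)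
  have hinner : -⟪x - y, y⟫ ≤ ‖x - y‖ * ‖y‖ :=
    (neg_le_abs _).trans (abs_real_inner_le_norm _ _)
  linarith

theorem one_sub_cos_angle_le {x : V} (hx : x ≠ 0) (y : V) :
    1 - cos (angle x y) ≤ 2 * ‖x - y‖ / ‖x‖ := by
  have hx₀ : 0 < ‖x‖ := norm_pos_iff.mpr hx
  rcases eq_or_ne y 0 with rfl | hy
  · rw [angle_zero_right, cos_pi_div_two, sub_zero, le_div_iff₀ hx₀, sub_zero]
    linarith
  have hxy : 0 < ‖x‖ * ‖y‖ := mul_pos hx₀ (norm_pos_iff.mpr hy)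
  calc 1 - cos (angle x y) = (‖x‖ * ‖y‖ - ⟪x, y⟫) / (‖x‖ * ‖y‖) := by
        rw [cos_angle]; field_simp
    _ ≤ 2 * ‖x - y‖ * ‖y‖ / (‖x‖ * ‖y‖) := by gcongr; exact norm_mul_norm_sub_inner_le x y
    _ = 2 * ‖x - y‖ / ‖x‖ := by field_simp

theorem angle_lt_of_cos_lt_cos_angle {x y : V} {a : ℝ} (ha : 0 ≤ a)
    (hcos : cos a < cos (angle x y)) : angle x y < a := by
  by_contra! hle
  exact (cos_le_cos_of_nonneg_of_le_pi ha (angle_le_pi x y) hle).not_gt hcos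

end InnerProductGeometry

theorem derivative_angle_bound_general (B' : ℝ → EuclideanSpace ℝ (Fin 3))
    (p' : EuclideanSpace ℝ (Fin 3)) (σ δ t : ℝ) (ht : t ∈ Set.Icc (0 : ℝ) 1)
    (hσ : 0 < σ)
    (hσmin : ∀ s ∈ Set.Icc (0 : ℝ) 1, σ ≤ ‖B' s‖)
    (hδ : ‖B' t - p'‖ ≤ δ) (hδσ : δ < σ) :
    p' ≠ 0 ∧
    1 - Real.cos (InnerProductGeometry.angle (B' t) p') ≤ 2 * δ / σ ∧
    (δ < σ / 2 * (1 - Real.sqrt 3 / 2) →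
      InnerProductGeometry.angle (B' t) p' < Real.pi / 6) := by
  have hσB : σ ≤ ‖B' t‖ := hσmin t ht
  have hB₀ : B' t ≠ 0 := norm_pos_iff.mp (hσ.trans_le hσB)
  have hp₀ : p' ≠ 0 := by
    rintro rfl
    rw [sub_zero] at hδ
    linarith
  have hcos : 1 - cos (angle (B' t) p') ≤ 2 * δ / σ :=
    (one_sub_cos_angle_le hB₀ p').trans <|
      div_le_div₀ (by linarith [norm_nonneg (B' t - p')]) (by linarith) hσ hσB
  refine ⟨hp₀, hcos, fun hsmall => angle_lt_of_cos_lt_cos_angle (by positivity) ?_⟩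
  have h2δσ : 2 * δ / σ < 1 - √3 / 2 := by
    rw [div_lt_iff₀ hσ]; linarith
  rw [cos_pi_div_six]
  linarith

/-- Let `B : [0,1] → ℝ³` be continuously differentiable with `min ‖B'‖ ≥ σ > 0`, and let
`P` be differentiable at `t` with `‖B'(t) - P'(t)‖ ≤ δ < σ`.  Then `P'(t) ≠ 0`, the angle
`θ(t)` between `B'(t)` and `P'(t)` satisfies `1 - cos θ(t) ≤ 2δ/σ`, and if moreover
`δ < (σ/2)(1 - √3/2)` then `θ(t) < π/6`. -/
theorem derivative_angle_bound (B P B' : ℝ → EuclideanSpace ℝ (Fin 3))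
    (p' : EuclideanSpace ℝ (Fin 3)) (σ δ t : ℝ) (ht : t ∈ Set.Icc (0 : ℝ) 1)
    (hσ : 0 < σ)
    (hB : ∀ s ∈ Set.Icc (0 : ℝ) 1, HasDerivAt B (B' s) s)
    (hBc : ContinuousOn B' (Set.Icc (0 : ℝ) 1))
    (hσmin : ∀ s ∈ Set.Icc (0 : ℝ) 1, σ ≤ ‖B' s‖)
    (hP : HasDerivAt P p' t)
    (hδ : ‖B' t - p'‖ ≤ δ) (hδσ : δ < σ) :
    p' ≠ 0 ∧
    1 - Real.cos (InnerProductGeometry.angle (B' t) p') ≤ 2 * δ / σ ∧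
    (δ < σ / 2 * (1 - Real.sqrt 3 / 2) →
      InnerProductGeometry.angle (B' t) p' < Real.pi / 6) :=
  derivative_angle_bound_general B' p' σ δ t ht hσ hσmin hδ hδσ
end

section
/- Let γ : [0,1] → ℝ³ be an injective continuous curve. Suppose [0,1] is partitioned into consecutive closed subintervals I₁,…,I_K, and for each k there is a set Γ_k ⊆ ℝ³ with γ(I_k) ⊆ Γ_k, such that Γ_k ∩ Γ_{k'} = ∅ whenever |k - k'| ≥ 2, and Γ_k ∩ Γ_{k+1} is a single plane section meeting each of two given simple arcs P_k ⊆ Γ_k and P_{k+1} ⊆ Γ_{k+1} only in their common endpoint. If each P_k is a simple arc contained in Γ_k, P_k and P_{k+1} share exactly one endpoint, and P_k meets the two boundary plane sections of Γ_k only at its endpoints, then the concatenation ⋃_k P_k is a simple arc. -/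
open Real

lemma glue_closed {X Y : Type*} [TopologicalSpace X] [TopologicalSpace Y]
    {f : X → Y} {s t : Set X} (hs : IsClosed s) (ht : IsClosed t)
    (hfs : ContinuousOn f s) (hft : ContinuousOn f t) :
    ContinuousOn f (s ∪ t) := by
  intro x hx
  have h1 : ContinuousWithinAt f s x := by
    by_cases hxs : x ∈ s
    · exact hfs x hxs
    · exact continuousWithinAt_of_notMem_closure (by rwa [hs.closure_eq])
  have h2 : ContinuousWithinAt f t x := by
    by_cases hxt : x ∈ t
    · exact hft x hxt
    · exact continuousWithinAt_of_notMem_closure (by rwa [ht.closure_eq])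
  exact h1.union h2

/-- Gluing lemma for pipe sections: let `γ` be an injective continuous curve on `[0,1]`,
partitioned by parameters `t 0 = 0 < t 1 < ⋯ < t K = 1` into sub-arcs, each contained in
a pipe section `Γ k`; non-adjacent pipe sections are disjoint; adjacent pipe sections meet
in a plane section `S (k+1)`; each simple arc `P k` lies in `Γ k`, consecutive arcs share
exactly one endpoint, and each arc meets the boundary plane sections only at its
endpoints.  Then the concatenation `F` of the arcs `P k` is a simple arc. -/
theorem pipe_section_gluing (K : ℕ) (hK : 1 ≤ K) (t : ℕ → ℝ)
    (ht0 : t 0 = 0) (htK : t K = 1) (hmono : ∀ k < K, t k < t (k + 1))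
    (γ : ℝ → EuclideanSpace ℝ (Fin 3))
    (hγc : ContinuousOn γ (Set.Icc (0 : ℝ) 1)) (hγinj : Set.InjOn γ (Set.Icc (0 : ℝ) 1))
    (Γ : ℕ → Set (EuclideanSpace ℝ (Fin 3)))
    (hγΓ : ∀ k < K, γ '' Set.Icc (t k) (t (k + 1)) ⊆ Γ k)
    (P : ℕ → ℝ → EuclideanSpace ℝ (Fin 3))
    (hPc : ∀ k < K, ContinuousOn (P k) (Set.Icc (t k) (t (k + 1))))
    (hPinj : ∀ k < K, Set.InjOn (P k) (Set.Icc (t k) (t (k + 1))))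
    (hPΓ : ∀ k < K, P k '' Set.Icc (t k) (t (k + 1)) ⊆ Γ k)
    (hdisj : ∀ k < K, ∀ k' < K, k + 2 ≤ k' → Γ k ∩ Γ k' = ∅)
    (S : ℕ → Set (EuclideanSpace ℝ (Fin 3)))
    (hS : ∀ k, k + 1 < K → Γ k ∩ Γ (k + 1) = S (k + 1))
    (hend : ∀ k, k + 1 < K → P k (t (k + 1)) = P (k + 1) (t (k + 1)))
    (hmeetL : ∀ k, k + 1 < K →
      (P k '' Set.Icc (t k) (t (k + 1))) ∩ S (k + 1) = {P k (t (k + 1))})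
    (hmeetR : ∀ k, k + 1 < K →
      (P (k + 1) '' Set.Icc (t (k + 1)) (t (k + 2))) ∩ S (k + 1) = {P k (t (k + 1))})
    (F : ℝ → EuclideanSpace ℝ (Fin 3))
    (hF : ∀ k < K, ∀ s ∈ Set.Icc (t k) (t (k + 1)), F s = P k s) :
    ContinuousOn F (Set.Icc (0 : ℝ) 1) ∧ Set.InjOn F (Set.Icc (0 : ℝ) 1) := by
  -- monotonicity of t
  have tmono : ∀ j k, j ≤ k → k ≤ K → t j ≤ t k := by
    intro j k hjk hkK
    induction k with
    | zero => simp_all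
    | succ n ih =>
      rcases Nat.lt_or_ge j (n+1) with h | h
      · exact le_trans (ih (Nat.lt_succ_iff.mp h) (le_trans (Nat.le_succ n) hkK))
          (le_of_lt (hmono n (Nat.lt_of_succ_le hkK)))
      · have : j = n + 1 := le_antisymm hjk h
        simp [this]
  -- every point of [0,1] lies in some subinterval
  have hcover : ∀ x ∈ Set.Icc (0:ℝ) 1, ∃ k < K, x ∈ Set.Icc (t k) (t (k+1)) := by
    intro x hx
    have key : ∀ n, 1 ≤ n → n ≤ K → x ≤ t n → ∃ k < n, x ∈ Set.Icc (t k) (t (k+1)) := by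
      intro n
      induction n with
      | zero => intro h; omega
      | succ m ih =>
        intro _ hmK hxn
        rcases Nat.eq_zero_or_pos m with hm | hm
        · subst hm
          exact ⟨0, Nat.one_pos, ⟨ht0 ▸ hx.1, hxn⟩⟩
        · by_cases hxm : x ≤ t m
          · obtain ⟨k, hk, hk2⟩ := ih hm (le_trans (Nat.le_succ m) hmK) hxm
            exact ⟨k, Nat.lt_succ_of_lt hk, hk2⟩
          · exact ⟨m, Nat.lt_succ_self m, ⟨le_of_lt (lt_of_not_ge hxm), hxn⟩⟩
    obtain ⟨k, hk, hk2⟩ := key K hK le_rfl (htK ▸ hx.2)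
    exact ⟨k, hk, hk2⟩
  constructor
  · -- continuity
    have main : ∀ n, 1 ≤ n → n ≤ K → ContinuousOn F (Set.Icc (t 0) (t n)) := by
      intro n
      induction n with
      | zero => intro h; omega
      | succ m ih =>
        intro _ hmK
        have hm1K : m < K := Nat.lt_of_succ_le hmK
        have cPm : ContinuousOn F (Set.Icc (t m) (t (m+1))) :=
          (hPc m hm1K).congr (fun s hs => hF m hm1K s hs)
        rcases Nat.eq_zero_or_pos m with hm | hm
        · subst hm; exact cPm
        · have cmain : ContinuousOn F (Set.Icc (t 0) (t m)) :=
            ih hm (le_trans (Nat.le_succ m) hmK)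
          have hunion : Set.Icc (t 0) (t m) ∪ Set.Icc (t m) (t (m+1)) =
              Set.Icc (t 0) (t (m+1)) :=
            Set.Icc_union_Icc_eq_Icc (tmono 0 m (Nat.zero_le m) (le_of_lt hm1K))
              (le_of_lt (hmono m hm1K))
          rw [← hunion]
          exact glue_closed isClosed_Icc isClosed_Icc cmain cPm
    have := main K hK le_rfl
    rwa [ht0, htK] at this
  · -- injectivity
    have key : ∀ a b ka kb, ka < K → kb < K → ka ≤ kb →
        a ∈ Set.Icc (t ka) (t (ka+1)) → b ∈ Set.Icc (t kb) (t (kb+1)) →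
        P ka a = P kb b → a = b := by
      intro a b ka kb hka hkb hle ha hb heq
      rcases lt_or_ge (kb) (ka + 2) with hlt | hge
      · -- kb = ka or kb = ka + 1
        have hcases : kb = ka ∨ kb = ka + 1 := by omega
        rcases hcases with h | h
        · subst h; exact hPinj kb hka ha hb heq
        · subst h
          -- adjacent case
          have hk1K : ka + 1 < K := hkb
          have hmemS : P ka a ∈ S (ka + 1) := by
            rw [← hS ka hk1K]
            exact ⟨hPΓ ka hka ⟨a, ha, rfl⟩, heq ▸ hPΓ (ka+1) hkb ⟨b, hb, rfl⟩⟩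
          have ha' : P ka a ∈ (P ka '' Set.Icc (t ka) (t (ka+1))) ∩ S (ka+1) :=
            ⟨⟨a, ha, rfl⟩, hmemS⟩
          rw [hmeetL ka hk1K] at ha'
          have hxa : a = t (ka + 1) :=
            hPinj ka hka ha ⟨tmono ka (ka+1) (Nat.le_succ ka) (le_of_lt hk1K), le_refl _⟩ ha'
          have hb' : P (ka+1) b ∈ (P (ka+1) '' Set.Icc (t (ka+1)) (t (ka+2))) ∩ S (ka+1) :=
            ⟨⟨b, hb, rfl⟩, heq ▸ hmemS⟩
          rw [hmeetR ka hk1K] at hb'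
          have hb'' : P (ka+1) b = P (ka+1) (t (ka+1)) := by
            rw [Set.mem_singleton_iff] at hb'
            rw [hb', hend ka hk1K]
          have hxb : b = t (ka + 1) :=
            hPinj (ka+1) hkb hb
              ⟨le_refl _, le_of_lt (hmono (ka+1) hkb)⟩ hb''
          rw [hxa, hxb]
      · -- non-adjacent: contradiction
        exfalso
        have h1 : P ka a ∈ Γ ka := hPΓ ka hka ⟨a, ha, rfl⟩
        have h2 : P ka a ∈ Γ kb := heq ▸ hPΓ kb hkb ⟨b, hb, rfl⟩
        have := hdisj ka hka kb hkb hge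
        exact absurd (Set.mem_inter h1 h2) (by rw [this]; exact Set.notMem_empty _)
    intro x hx y hy hxy
    obtain ⟨k, hk, hkx⟩ := hcover x hx
    obtain ⟨k', hk', hky⟩ := hcover y hy
    have hFx : F x = P k x := hF k hk x hkx
    have hFy : F y = P k' y := hF k' hk' y hky
    rcases le_total k k' with h | h
    · exact key x y k k' hk hk' h hkx hky (by rw [← hFx, ← hFy, hxy])
    · exact (key y x k' k hk' hk h hky hkx (by rw [← hFx, ← hFy, hxy])).symm
end
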